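/- arXiv:2112.12097 — 2 statements merged into one kernel-verified Lean document; each statement's English description precedes it below -/
import Mathlib

section
/- Fix k ≥ 2. Let L : C[0,π] → C[0,π] be a continuous linear operator with L(C₀[0,π]) ⊆ C₀[0,π], and set K = L − ρLρ. Then for every f ∈ C(S^k) and every ξ ∈ S^k, ∫_{SO(k+1)} (T_b ∘ K^# ∘ T_{b^{-1}}) f(ξ) dμ_{k+1}(b) = 0. -/
open MeasureTheory Matrix Metric Real
open scoped RealInnerProductSpace ENNReal
noncomputable section

abbrev Eucl (d : ℕ) : Type := EuclideanSpace ℝ (Fin d)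
abbrev Sph (d : ℕ) := Metric.sphere (0 : Eucl d) 1

/-- The north pole `1^k = (0,…,0,1)` of the sphere `S^k ⊆ ℝ^{k+1}`. -/
def npole (m : ℕ) : Sph (m + 1) :=
  ⟨EuclideanSpace.single (Fin.last m) (1 : ℝ), by simp⟩

/-- The south pole `-1^k = (0,…,0,-1)`. -/
def spole (m : ℕ) : Sph (m + 1) :=
  ⟨EuclideanSpace.single (Fin.last m) (-1 : ℝ), by simp⟩

lemma sphere_sum_sq {d : ℕ} (y : Sph d) : ∑ i : Fin d, (y.1 i) ^ 2 = 1 := by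
  have hy : ‖y.1‖ = 1 := by simpa using y.2
  rw [EuclideanSpace.norm_eq] at hy
  have h' : Real.sqrt (∑ i, ‖y.1 i‖ ^ 2) ^ 2 = 1 := by rw [hy]; norm_num
  rw [Real.sq_sqrt (by positivity)] at h'
  simpa [Real.norm_eq_abs, sq_abs] using h'

lemma phi_mem {m : ℕ} (t : ℝ) (y : Sph (m + 1)) :
    (WithLp.equiv 2 (Fin (m + 2) → ℝ)).symm
      (Fin.snoc (fun i => Real.sin t * ((WithLp.equiv 2 (Fin (m + 1) → ℝ)) y.1) i) (Real.cos t))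
      ∈ Metric.sphere (0 : Eucl (m + 2)) 1 := by
  rw [mem_sphere_iff_norm, sub_zero, EuclideanSpace.norm_eq]
  have hw : (∑ i : Fin (m + 2),
      ‖(WithLp.equiv 2 (Fin (m + 2) → ℝ)).symm
        (Fin.snoc (fun i => Real.sin t * ((WithLp.equiv 2 (Fin (m + 1) → ℝ)) y.1) i)
          (Real.cos t)) i‖ ^ 2) = 1 := by
    simp only [WithLp.equiv_symm_apply, PiLp.toLp_apply, Real.norm_eq_abs, sq_abs]
    rw [Fin.sum_univ_castSucc]
    simp only [Fin.snoc_castSucc, Fin.snoc_last]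
    have hmul : (∑ i : Fin (m + 1),
        (Real.sin t * ((WithLp.equiv 2 (Fin (m + 1) → ℝ)) y.1) i) ^ 2)
        = Real.sin t ^ 2 * ∑ i : Fin (m + 1), (y.1 i) ^ 2 := by
      rw [Finset.mul_sum]
      refine Finset.sum_congr rfl fun i _ => ?_
      have : ((WithLp.equiv 2 (Fin (m + 1) → ℝ)) y.1) i = y.1 i := rfl
      rw [this]; ring
    rw [hmul, sphere_sum_sq, mul_one]
    exact Real.sin_sq_add_cos_sq t
  rw [hw]
  exact Real.sqrt_one

/-- The map `Φ_k(t, y) = (y sin t, cos t)` from `ℝ × S^{k-1}` to `S^k`. -/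
def phi {m : ℕ} (t : ℝ) (y : Sph (m + 1)) : Sph (m + 2) :=
  ⟨(WithLp.equiv 2 (Fin (m + 2) → ℝ)).symm
      (Fin.snoc (fun i => Real.sin t * ((WithLp.equiv 2 (Fin (m + 1) → ℝ)) y.1) i) (Real.cos t)),
    phi_mem t y⟩

/-- The latitude `t ∈ [0,π]` of a point on `S^k`, i.e. `arccos` of the last coordinate. -/
def lat {m : ℕ} (ξ : Sph (m + 2)) : ℝ := Real.arccos (ξ.1 (Fin.last (m + 1)))

lemma lat_mem_Icc {m : ℕ} (ξ : Sph (m + 2)) : lat ξ ∈ Set.Icc (0 : ℝ) π :=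
  ⟨Real.arccos_nonneg _, Real.arccos_le_pi _⟩

/-- The "equatorial part" of a point of `S^k`: its first `k` coordinates. -/
def eqpart {m : ℕ} (ξ : Sph (m + 2)) : Eucl (m + 1) :=
  (WithLp.equiv 2 (Fin (m + 1) → ℝ)).symm (fun i => ξ.1 i.castSucc)

open scoped Classical in
/-- The longitudinal direction of a point of `S^k`, an element of `S^{k-1}`; at the poles it is
(by convention) the north pole `1^{k-1}` of `S^{k-1}`. -/
def ydir {m : ℕ} (ξ : Sph (m + 2)) : Sph (m + 1) :=
  if h : eqpart ξ = 0 then npole m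
  else ⟨‖eqpart ξ‖⁻¹ • eqpart ξ, by
    rw [mem_sphere_iff_norm, sub_zero, norm_smul, norm_inv, norm_norm,
      inv_mul_cancel₀ (norm_ne_zero_iff.mpr h)]⟩

lemma continuous_phi_left {m : ℕ} (y : Sph (m + 1)) :
    Continuous fun t : ℝ => (phi t y : Sph (m + 2)) := by
  apply Continuous.subtype_mk
  refine (PiLp.continuous_toLp 2 (fun _ : Fin (m + 2) => ℝ)).comp ?_
  apply continuous_pi
  intro j
  refine Fin.lastCases ?_ ?_ j
  · simpa [Fin.snoc_last] using Real.continuous_cos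
  · intro i
    simp only [Fin.snoc_castSucc]
    exact Real.continuous_sin.mul continuous_const

lemma continuous_phi_right {m : ℕ} (t : ℝ) :
    Continuous fun y : Sph (m + 1) => (phi t y : Sph (m + 2)) := by
  apply Continuous.subtype_mk
  refine (PiLp.continuous_toLp 2 (fun _ : Fin (m + 2) => ℝ)).comp ?_
  apply continuous_pi
  intro j
  refine Fin.lastCases ?_ ?_ j
  · simpa [Fin.snoc_last] using continuous_const (y := Real.cos t)
  · intro i
    simp only [Fin.snoc_castSucc]
    exact continuous_const.mul
      ((continuous_apply i).comp ((PiLp.continuous_ofLp 2 (fun _ : Fin (m + 1) => ℝ)).comp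
        continuous_subtype_val))

/-- The interval `[0,π]`. -/
abbrev IccPi : Set ℝ := Set.Icc (0 : ℝ) π

/-- `0` as an element of `[0,π]`. -/
def loPt : IccPi := ⟨0, Set.left_mem_Icc.mpr Real.pi_nonneg⟩

/-- `π` as an element of `[0,π]`. -/
def hiPt : IccPi := ⟨π, Set.right_mem_Icc.mpr Real.pi_nonneg⟩

/-- The slice of a continuous function on `S^k` along the meridian through `y ∈ S^{k-1}`:
`t ↦ f(Φ_k(t,y))` as an element of `C[0,π]`. -/
def merid {m : ℕ} (f : C(Sph (m + 2), ℝ)) (y : Sph (m + 1)) : C(IccPi, ℝ) :=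
  ⟨fun t => f (phi t.1 y), by
    exact f.continuous.comp ((continuous_phi_left y).comp continuous_subtype_val)⟩

/-- The latitudinal operator `L^#` acting on continuous functions on `S^k`. -/
def latOp {m : ℕ} (L : C(IccPi, ℝ) →L[ℝ] C(IccPi, ℝ)) (f : C(Sph (m + 2), ℝ))
    (ξ : Sph (m + 2)) : ℝ :=
  L (merid f (ydir ξ)) ⟨lat ξ, lat_mem_Icc ξ⟩

/-- The reflection `t ↦ π - t` of `[0,π]`. -/
def reflI : C(IccPi, IccPi) :=
  ⟨fun t => ⟨π - t.1, ⟨by linarith [t.2.2], by linarith [t.2.1]⟩⟩,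
    Continuous.subtype_mk (continuous_const.sub continuous_subtype_val) _⟩

/-- The reflection operator `ρ g(t) = g(π - t)` on `C[0,π]`. -/
def reflOp : C(IccPi, ℝ) →L[ℝ] C(IccPi, ℝ) where
  toFun g := g.comp reflI
  map_add' g h := rfl
  map_smul' c g := rfl
  cont := ContinuousMap.continuous_precomp reflI

/-- The reflection of the sphere `S^k` changing the sign of the last coordinate. -/
def reflSph {m : ℕ} (ξ : Sph (m + 2)) : Sph (m + 2) :=
  ⟨(WithLp.equiv 2 (Fin (m + 2) → ℝ)).symm
      (Fin.snoc (fun i => ξ.1 i.castSucc) (-(ξ.1 (Fin.last (m + 1))))), by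
    rw [mem_sphere_iff_norm, sub_zero, EuclideanSpace.norm_eq]
    have hw : (∑ i : Fin (m + 2),
        ‖(WithLp.equiv 2 (Fin (m + 2) → ℝ)).symm
          (Fin.snoc (fun i => ξ.1 i.castSucc) (-(ξ.1 (Fin.last (m + 1))))) i‖ ^ 2) = 1 := by
      simp only [WithLp.equiv_symm_apply, PiLp.toLp_apply, Real.norm_eq_abs, sq_abs]
      rw [Fin.sum_univ_castSucc]
      simp only [Fin.snoc_castSucc, Fin.snoc_last, neg_sq]
      have h := sphere_sum_sq ξ
      rw [Fin.sum_univ_castSucc] at h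
      exact h
    rw [hw]
    exact Real.sqrt_one⟩

lemma continuous_reflSph {m : ℕ} : Continuous (reflSph (m := m)) := by
  apply Continuous.subtype_mk
  refine (PiLp.continuous_toLp 2 (fun _ : Fin (m + 2) => ℝ)).comp ?_
  apply continuous_pi
  intro j
  refine Fin.lastCases ?_ ?_ j
  · simp only [Fin.snoc_last]
    exact ((continuous_apply (Fin.last (m + 1))).comp
      ((PiLp.continuous_ofLp 2 (fun _ : Fin (m + 2) => ℝ)).comp continuous_subtype_val)).neg
  · intro i
    simp only [Fin.snoc_castSucc]
    exact (continuous_apply i.castSucc).comp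
      ((PiLp.continuous_ofLp 2 (fun _ : Fin (m + 2) => ℝ)).comp continuous_subtype_val)

/-- The reflection `ρ^#` as a continuous self-map of `S^k`. -/
def reflSphCM {m : ℕ} : C(Sph (m + 2), Sph (m + 2)) := ⟨reflSph, continuous_reflSph⟩

instance (d : ℕ) : MeasurableSpace (Matrix (Fin d) (Fin d) ℝ) :=
  inferInstanceAs (MeasurableSpace (Fin d → Fin d → ℝ))

/-- The special orthogonal group `SO(d)` as a subgroup of the orthogonal group. -/
def SOsub (d : ℕ) : Subgroup ↥(Matrix.orthogonalGroup (Fin d) ℝ) where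
  carrier := {A | Matrix.det (A : Matrix (Fin d) (Fin d) ℝ) = 1}
  one_mem' := by simp
  mul_mem' := by
    intro a b ha hb
    simp only [Set.mem_setOf_eq] at *
    rw [Matrix.UnitaryGroup.mul_val, Matrix.det_mul, ha, hb, mul_one]
  inv_mem' := by
    intro a ha
    simp only [Set.mem_setOf_eq] at *
    rw [Matrix.UnitaryGroup.inv_val, Matrix.star_eq_conjTranspose,
      show ((a : Matrix (Fin d) (Fin d) ℝ))ᴴ = (a : Matrix (Fin d) (Fin d) ℝ)ᵀ from rfl,
      Matrix.det_transpose, ha]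

/-- The special orthogonal group `SO(d)`. -/
abbrev SOg (d : ℕ) := ↥(SOsub d)

/-- The matrix of an element of `SO(d)`. -/
abbrev SOg.mat {d : ℕ} (b : SOg d) : Matrix (Fin d) (Fin d) ℝ :=
  ((b : ↥(Matrix.orthogonalGroup (Fin d) ℝ)) : Matrix (Fin d) (Fin d) ℝ)

lemma SOg.matT_mul {d : ℕ} (b : SOg d) : b.matᵀ * b.mat = 1 := by
  have h := (b : ↥(Matrix.orthogonalGroup (Fin d) ℝ)).2.1
  simpa [Matrix.star_eq_conjTranspose] using h

lemma mulVec_mem_sphere {d : ℕ} (b : SOg d) (x : Sph d) :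
    (WithLp.equiv 2 (Fin d → ℝ)).symm (b.mat.mulVec ((WithLp.equiv 2 (Fin d → ℝ)) x.1)) ∈
      Metric.sphere (0 : Eucl d) 1 := by
  have hx : ‖x.1‖ = 1 := by simpa using x.2
  rw [mem_sphere_iff_norm, sub_zero]
  have key : ∀ w : Eucl d,
      ‖w‖ ^ 2 = (WithLp.equiv 2 (Fin d → ℝ)) w ⬝ᵥ (WithLp.equiv 2 (Fin d → ℝ)) w := by
    intro w
    rw [EuclideanSpace.norm_eq, Real.sq_sqrt (by positivity)]
    simp [dotProduct, sq_abs, pow_two]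
  set v : Fin d → ℝ := (WithLp.equiv 2 (Fin d → ℝ)) x.1 with hv
  have hdot : (b.mat.mulVec v) ⬝ᵥ (b.mat.mulVec v) = v ⬝ᵥ v := by
    rw [Matrix.dotProduct_mulVec, ← Matrix.mulVec_transpose, Matrix.mulVec_mulVec, SOg.matT_mul,
      Matrix.one_mulVec]
  have h1 : ‖(WithLp.equiv 2 (Fin d → ℝ)).symm (b.mat.mulVec v)‖ ^ 2 = (1 : ℝ) := by
    rw [key, Equiv.apply_symm_apply, hdot, ← key, hx, one_pow]
  nlinarith [norm_nonneg ((WithLp.equiv 2 (Fin d → ℝ)).symm (b.mat.mulVec v))]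

/-- The rotation action of `SO(d)` on the sphere `S^{d-1}`. -/
def rot {d : ℕ} (b : SOg d) (x : Sph d) : Sph d :=
  ⟨(WithLp.equiv 2 (Fin d → ℝ)).symm (b.mat.mulVec ((WithLp.equiv 2 (Fin d → ℝ)) x.1)),
    mulVec_mem_sphere b x⟩

lemma continuous_rot {d : ℕ} (b : SOg d) : Continuous (rot b) := by
  apply Continuous.subtype_mk
  refine (PiLp.continuous_toLp 2 (fun _ : Fin d => ℝ)).comp ?_
  have : Continuous fun v : Fin d → ℝ => b.mat.mulVec v :=
    b.mat.mulVecLin.continuous_of_finiteDimensional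
  exact this.comp ((PiLp.continuous_ofLp 2 (fun _ : Fin d => ℝ)).comp continuous_subtype_val)

/-- Rotation as a continuous self-map of the sphere. -/
def rotCM {d : ℕ} (b : SOg d) : C(Sph d, Sph d) := ⟨rot b, continuous_rot b⟩

/-- The rotation operator `T_b f = f ∘ b⁻¹` on continuous functions on the sphere. -/
def Trot {d : ℕ} (b : SOg d) (f : C(Sph d, ℝ)) : C(Sph d, ℝ) := f.comp (rotCM b⁻¹)

/-- The rotation operator `T_b` on `L²` of the sphere. -/
def TrotL2 {d : ℕ} (σ : Measure (Sph d)) (hσ : ∀ b : SOg d, MeasurePreserving (rot b) σ σ)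
    (b : SOg d) : Lp ℝ 2 σ →L[ℝ] Lp ℝ 2 σ :=
  (Lp.compMeasurePreservingₗᵢ ℝ (rot b⁻¹) (hσ b⁻¹)).toContinuousLinearMap

/-- The latitude-`t` circle slice of a continuous function on `S^k`:
`y ↦ f(Φ_k(t,y))` as an element of `C(S^{k-1}, ℝ)`. -/
def ringSlice {m : ℕ} (f : C(Sph (m + 2), ℝ)) (t : ℝ) : C(Sph (m + 1), ℝ) :=
  ⟨fun y => f (phi t y), f.continuous.comp (continuous_phi_right t)⟩

open scoped Classical in
/-- The lifted operator `P̂` acting on functions on `S^k` (with value `0` at the poles,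
and defined via the latitude/longitude decomposition elsewhere). -/
def hatOp {m : ℕ} (P : C(Sph (m + 1), ℝ) →L[ℝ] C(Sph (m + 1), ℝ)) (g : Sph (m + 2) → ℝ)
    (ξ : Sph (m + 2)) : ℝ :=
  if ξ = npole (m + 1) ∨ ξ = spole (m + 1) then 0
  else if h : Continuous g then P (ringSlice ⟨g, h⟩ (lat ξ)) (ydir ξ) else 0

/-- The spherical coordinates `Ψ_n : ℝ^n → S^n` given recursively by `Ψ_1(t) = (sin t, cos t)`
and `Ψ_{n+1}(v, t) = (Ψ_n(v) sin t, cos t)`. -/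
def Psi : (n : ℕ) → (Fin n → ℝ) → Sph (n + 1)
  | 0, _ => npole 0
  | n + 1, v => phi (v (Fin.last n)) (Psi n (fun i => v i.castSucc))

/-- The patch `Ψ_n([a 0, b 0] × ⋯ × [a (n-1), b (n-1)]) ⊆ S^n`. -/
def patchSet (n : ℕ) (a b : Fin n → ℝ) : Set (Sph (n + 1)) :=
  Psi n '' {v | ∀ j, v j ∈ Set.Icc (a j) (b j)}

/-!
Let `c = diag(-1, 1, …, 1, -1) ∈ SO(k+1)`. It maps `Φ_k(t, y)` to `Φ_k(π - t, u y)`, where `u`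
negates the first coordinate of `y`; for `k ≥ 2` the map `u` fixes the pole `1^{k-1}` that serves
as the longitude at the poles of `S^k`. Hence `K^# (g ∘ c) (c η) = -K^# g η` for the antisymmetric
operator `K = L - ρLρ`, so the integrand `F b = K^# (f ∘ b) (b⁻¹ ξ)` satisfies `F (b c) = -F b`.
A finite left-invariant measure on a group is also right-invariant (left-invariant measures are
unique up to scaling), so `∫ F = ∫ F (· c) = -∫ F`.
-/

theorem MeasureTheory.Measure.IsMulLeftInvariant.isMulRightInvariant_of_isFiniteMeasure
    {G : Type*} [Group G] [MeasurableSpace G] [MeasurableMul₂ G] [MeasurableInv G]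
    (μ : Measure G) [IsFiniteMeasure μ] [μ.IsMulLeftInvariant] : μ.IsMulRightInvariant := by
  refine ⟨fun g => ?_⟩
  rcases eq_zero_or_neZero μ with rfl | hμ
  · simp
  -- `map (· * g) μ` is again left invariant with the same total mass, so uniqueness applies
  have hμ0 : μ Set.univ ≠ 0 := by simp [hμ.out]
  rw [measure_eq_div_smul (map (· * g) μ) μ hμ0 (measure_ne_top μ _),
    map_apply (measurable_mul_const g) MeasurableSet.univ, Set.preimage_univ,
    ENNReal.div_self hμ0 (measure_ne_top μ _), one_smul]

-- With second countability the Borel σ-algebra of `SOg d × SOg d` is the product one, which makes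
-- `SOg d` a measurable group.
instance (d : ℕ) : BorelSpace (Matrix (Fin d) (Fin d) ℝ) :=
  inferInstanceAs (BorelSpace (Fin d → Fin d → ℝ))

instance (d : ℕ) : SecondCountableTopology (Matrix (Fin d) (Fin d) ℝ) :=
  inferInstanceAs (SecondCountableTopology (Fin d → Fin d → ℝ))

instance (d : ℕ) : SecondCountableTopology (orthogonalGroup (Fin d) ℝ) :=
  inferInstanceAs
    (SecondCountableTopology (orthogonalGroup (Fin d) ℝ : Set (Matrix (Fin d) (Fin d) ℝ)))

instance (d : ℕ) : SecondCountableTopology (SOg d) :=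
  inferInstanceAs (SecondCountableTopology (SOsub d : Set (orthogonalGroup (Fin d) ℝ)))

lemma SOg.mat_mul {d : ℕ} (a b : SOg d) : (a * b).mat = a.mat * b.mat := rfl

lemma rot_apply {d : ℕ} (b : SOg d) (x : Sph d) (j : Fin d) :
    (rot b x).1 j = b.mat.mulVec (fun i => x.1 i) j := rfl

lemma rot_mul {d : ℕ} (a b : SOg d) (x : Sph d) : rot (a * b) x = rot a (rot b x) := by
  ext j
  simp only [rot_apply, SOg.mat_mul, ← Matrix.mulVec_mulVec]

lemma rotCM_mul {d : ℕ} (a b : SOg d) : rotCM (a * b) = (rotCM a).comp (rotCM b) := by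
  ext1 x
  exact rot_mul a b x

section Flip

variable {m : ℕ}

def flipDiag (m : ℕ) : Fin (m + 2) → ℝ := fun i =>
  if i = 0 ∨ i = Fin.last (m + 1) then -1 else 1

lemma flipDiag_mul_self (i : Fin (m + 2)) : flipDiag m i * flipDiag m i = 1 := by
  unfold flipDiag
  split_ifs <;> norm_num

lemma prod_flipDiag : ∏ i, flipDiag m i = 1 := by
  rw [Fin.prod_univ_succ, Fin.prod_univ_castSucc, Finset.prod_eq_one]
  · simp [flipDiag]
  · intro i _
    simp [flipDiag, Fin.ext_iff, i.isLt.ne]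

lemma flipDiag_last : flipDiag m (Fin.last (m + 1)) = -1 := by simp [flipDiag]

lemma flipDiag_castSucc (i : Fin (m + 1)) :
    flipDiag m i.castSucc = if i = 0 then -1 else 1 := by
  simp [flipDiag, Fin.castSucc_ne_last]

def flipSO (m : ℕ) : SOg (m + 2) :=
  ⟨⟨diagonal (flipDiag m), by
    rw [mem_orthogonalGroup_iff, diagonal_transpose, diagonal_mul_diagonal]
    simp only [flipDiag_mul_self, diagonal_one]⟩, by
    show (diagonal (flipDiag m)).det = 1
    rw [det_diagonal, prod_flipDiag]⟩

lemma flipSO_mul_self : flipSO m * flipSO m = 1 := by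
  apply Subtype.ext; apply Subtype.ext
  show diagonal (flipDiag m) * diagonal (flipDiag m) = 1
  simp only [diagonal_mul_diagonal, flipDiag_mul_self, diagonal_one]

lemma flipSO_inv : (flipSO m)⁻¹ = flipSO m := inv_eq_of_mul_eq_one_right flipSO_mul_self

lemma rot_flipSO_apply (ξ : Sph (m + 2)) (j : Fin (m + 2)) :
    (rot (flipSO m) ξ).1 j = flipDiag m j * ξ.1 j := by
  rw [rot_apply]
  exact mulVec_diagonal _ _ j

end Flip

section Coordinates

variable {m : ℕ}

def negFirst (x : Eucl (m + 1)) : Eucl (m + 1) :=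
  WithLp.toLp 2 fun i => if i = 0 then -x i else x i

lemma negFirst_apply (x : Eucl (m + 1)) (i : Fin (m + 1)) :
    negFirst x i = if i = 0 then -x i else x i := rfl

lemma negFirst_negFirst (x : Eucl (m + 1)) : negFirst (negFirst x) = x := by
  ext i
  simp only [negFirst_apply]
  split_ifs <;> simp

lemma negFirst_eq_zero_iff {x : Eucl (m + 1)} : negFirst x = 0 ↔ x = 0 := by
  simp only [PiLp.ext_iff, negFirst_apply, PiLp.zero_apply]
  refine forall_congr' fun i => ?_
  split_ifs <;> simp

lemma negFirst_smul (r : ℝ) (x : Eucl (m + 1)) : negFirst (r • x) = r • negFirst x := by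
  ext i
  simp only [negFirst_apply, PiLp.smul_apply, smul_eq_mul]
  split_ifs <;> ring

lemma norm_negFirst (x : Eucl (m + 1)) : ‖negFirst x‖ = ‖x‖ := by
  simp only [EuclideanSpace.norm_eq, negFirst_apply]
  congr 1
  refine Finset.sum_congr rfl fun i _ => ?_
  split_ifs <;> simp

def negFirstSph (y : Sph (m + 1)) : Sph (m + 1) :=
  ⟨negFirst y.1, by simp [norm_negFirst]⟩

lemma negFirstSph_negFirstSph (y : Sph (m + 1)) : negFirstSph (negFirstSph y) = y :=
  Subtype.ext (negFirst_negFirst y.1)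

lemma negFirstSph_npole (hm : 1 ≤ m) : negFirstSph (npole m) = npole m := by
  ext i
  show negFirst (EuclideanSpace.single (Fin.last m) (1 : ℝ)) i = _
  have h0 : (0 : Fin (m + 1)) ≠ Fin.last m := by simp [Fin.ext_iff]; omega
  rw [negFirst_apply]
  split_ifs with hi
  · subst hi
    simp [npole, h0]
  · rfl

lemma phi_apply_castSucc (t : ℝ) (y : Sph (m + 1)) (i : Fin (m + 1)) :
    (phi t y).1 i.castSucc = sin t * y.1 i := by
  simp [phi]

lemma phi_apply_last (t : ℝ) (y : Sph (m + 1)) : (phi t y).1 (Fin.last (m + 1)) = cos t := by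
  simp [phi]

lemma rot_flipSO_phi (t : ℝ) (y : Sph (m + 1)) :
    rot (flipSO m) (phi t y) = phi (π - t) (negFirstSph y) := by
  ext j
  induction j using Fin.lastCases with
  | last =>
    rw [rot_flipSO_apply, phi_apply_last, phi_apply_last, flipDiag_last, cos_pi_sub, neg_one_mul]
  | cast i =>
    rw [rot_flipSO_apply, phi_apply_castSucc, phi_apply_castSucc, flipDiag_castSucc, sin_pi_sub]
    show _ = sin t * negFirst y.1 i
    rw [negFirst_apply]
    split_ifs <;> ring

lemma lat_rot_flipSO (ξ : Sph (m + 2)) : lat (rot (flipSO m) ξ) = π - lat ξ := by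
  rw [lat, lat, rot_flipSO_apply, flipDiag_last, neg_one_mul, arccos_neg]

lemma eqpart_rot_flipSO (ξ : Sph (m + 2)) :
    eqpart (rot (flipSO m) ξ) = negFirst (eqpart ξ) := by
  ext i
  show (rot (flipSO m) ξ).1 i.castSucc = negFirst (eqpart ξ) i
  rw [rot_flipSO_apply, flipDiag_castSucc, negFirst_apply]
  split_ifs <;> simp [eqpart]

lemma ydir_rot_flipSO (hm : 1 ≤ m) (ξ : Sph (m + 2)) :
    ydir (rot (flipSO m) ξ) = negFirstSph (ydir ξ) := by
  by_cases h : eqpart ξ = 0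
  · have h' : eqpart (rot (flipSO m) ξ) = 0 := by rw [eqpart_rot_flipSO, h, negFirst_eq_zero_iff]
    rw [ydir, ydir, dif_pos h, dif_pos h', negFirstSph_npole hm]
  · have h' : eqpart (rot (flipSO m) ξ) ≠ 0 := by
      rwa [eqpart_rot_flipSO, Ne, negFirst_eq_zero_iff]
    rw [ydir, ydir, dif_neg h, dif_neg h']
    ext1
    show ‖eqpart (rot (flipSO m) ξ)‖⁻¹ • eqpart (rot (flipSO m) ξ)
      = negFirst (‖eqpart ξ‖⁻¹ • eqpart ξ)
    rw [eqpart_rot_flipSO, norm_negFirst, negFirst_smul]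

end Coordinates

section Latitudinal

variable {m : ℕ}

lemma reflOp_apply (g : C(IccPi, ℝ)) (t : IccPi) : reflOp g t = g (reflI t) := rfl

lemma reflOp_reflOp (g : C(IccPi, ℝ)) : reflOp (reflOp g) = g := by
  ext t
  simp only [reflOp_apply]
  congr 1
  ext1
  exact sub_sub_cancel π t.1

lemma sub_reflOp_conj_apply_reflOp (L : C(IccPi, ℝ) →L[ℝ] C(IccPi, ℝ))
    (g : C(IccPi, ℝ)) :
    (L - reflOp.comp (L.comp reflOp)) (reflOp g)
      = -reflOp ((L - reflOp.comp (L.comp reflOp)) g) := by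
  simp only [_root_.sub_apply, ContinuousLinearMap.comp_apply, reflOp_reflOp,
    map_sub, neg_sub]

lemma merid_comp_rotCM_flipSO (g : C(Sph (m + 2), ℝ)) (y : Sph (m + 1)) :
    merid (g.comp (rotCM (flipSO m))) y = reflOp (merid g (negFirstSph y)) := by
  ext t
  show g (rot (flipSO m) (phi t.1 y)) = g (phi (π - t.1) (negFirstSph y))
  rw [rot_flipSO_phi]

lemma latOp_comp_rotCM_flipSO (hm : 1 ≤ m) {K : C(IccPi, ℝ) →L[ℝ] C(IccPi, ℝ)}
    (hK : ∀ g, K (reflOp g) = -reflOp (K g)) (g : C(Sph (m + 2), ℝ)) (η : Sph (m + 2)) :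
    latOp K (g.comp (rotCM (flipSO m))) (rot (flipSO m) η) = -latOp K g η := by
  rw [latOp, latOp, ydir_rot_flipSO hm, merid_comp_rotCM_flipSO, negFirstSph_negFirstSph, hK,
    ContinuousMap.neg_apply, reflOp_apply]
  congr 3
  ext1
  simp only [reflI, ContinuousMap.coe_mk, lat_rot_flipSO, sub_sub_cancel]

end Latitudinal

theorem marcinkiewicz_average_antisymmetric_latitudinal_vanishes_general
    (m : ℕ) (hm : 1 ≤ m)
    (L : C(IccPi, ℝ) →L[ℝ] C(IccPi, ℝ))
    (μ : Measure (SOg (m + 2))) [IsProbabilityMeasure μ]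
    (hμ : ∀ g : SOg (m + 2), MeasurePreserving (fun b => g * b) μ μ)
    (f : C(Sph (m + 2), ℝ)) (ξ : Sph (m + 2)) :
    ∫ b : SOg (m + 2),
      latOp (L - reflOp.comp (L.comp reflOp)) (f.comp (rotCM b)) (rot b⁻¹ ξ) ∂μ = 0 := by
  have : μ.IsMulLeftInvariant := ⟨fun g => (hμ g).map_eq⟩
  have := Measure.IsMulLeftInvariant.isMulRightInvariant_of_isFiniteMeasure μ
  refine integral_eq_zero_of_mul_right_eq_neg (g := flipSO m) fun b => ?_
  rw [_root_.mul_inv_rev, flipSO_inv, rot_mul, rotCM_mul, ← ContinuousMap.comp_assoc,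
    latOp_comp_rotCM_flipSO hm (sub_reflOp_conj_apply_reflOp L)]

/-- `k = m + 1 ≥ 2`: the Marcinkiewicz average of `K^# = (L - ρLρ)^#` vanishes. -/
theorem marcinkiewicz_average_antisymmetric_latitudinal_vanishes
    (m : ℕ) (hm : 1 ≤ m)
    (L : C(IccPi, ℝ) →L[ℝ] C(IccPi, ℝ))
    (hL : ∀ g : C(IccPi, ℝ), g loPt = 0 → g hiPt = 0 → L g loPt = 0 ∧ L g hiPt = 0)
    (μ : Measure (SOg (m + 2))) [IsProbabilityMeasure μ]
    (hμ : ∀ g : SOg (m + 2), MeasurePreserving (fun b => g * b) μ μ)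
    (f : C(Sph (m + 2), ℝ)) (ξ : Sph (m + 2)) :
    ∫ b : SOg (m + 2),
      latOp (L - reflOp.comp (L.comp reflOp)) (f.comp (rotCM b)) (rot b⁻¹ ξ) ∂μ = 0 :=
  marcinkiewicz_average_antisymmetric_latitudinal_vanishes_general m hm L μ hμ f ξ

end
end

section
/- Fix k ≥ 2. If P : C[0,π] → C[0,π] is a continuous linear operator with P(C₀[0,π]) ⊆ C₀[0,π], then for every f ∈ C(S^k) the function P^# f is continuous on S^k; that is, P^# maps C(S^k) into C(S^k). -/
/-!
Let `h = f ∘ Φ(·, 1^{k-1})`. Every meridian slice `f ∘ Φ(·, y)` agrees with `h` at `0` and `π`,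
so `P^# f(ξ) = G(ydir ξ, lat ξ) + P h (lat ξ)` with `G(y, t) = P(f ∘ Φ(·, y) - h)(t)` jointly
continuous and vanishing at `t ∈ {0, π}`. The direction `ydir` is discontinuous only at the poles,
and there the first term still tends to `0`: since `S^{k-1}` is compact, `G` is uniformly small
near `t = 0` and `t = π`, whatever the direction.
-/
open MeasureTheory Matrix Metric Real
open scoped RealInnerProductSpace ENNReal
noncomputable section

open Filter Topology

theorem Continuous.tendsto_prodMk_of_const_fiber {X Y T Z : Type*} [TopologicalSpace Y]
    [CompactSpace Y] [TopologicalSpace T] [TopologicalSpace Z] {G : Y × T → Z}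
    (hG : Continuous G) {t₀ : T} {z : Z} (hz : ∀ y, G (y, t₀) = z) (u : X → Y) {τ : X → T}
    {l : Filter X} (hτ : Tendsto τ l (𝓝 t₀)) :
    Tendsto (fun x => G (u x, τ x)) l (𝓝 z) := by
  have hfiber : Tendsto G (𝓝ˢ (Set.univ ×ˢ {t₀})) (𝓝 z) :=
    hG.tendsto_nhdsSet_nhds fun p hp => (congrArg (fun t => G (p.1, t)) hp.2).trans (hz p.1)
  rw [isCompact_univ.nhdsSet_prod_eq isCompact_singleton, nhdsSet_univ, nhdsSet_singleton]
    at hfiber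
  exact hfiber.comp (tendsto_top.prodMk hτ)

section Latitudinal

variable {m : ℕ}

lemma Continuous.phi {X : Type*} [TopologicalSpace X] {t : X → ℝ} {y : X → Sph (m + 1)}
    (ht : Continuous t) (hy : Continuous y) : Continuous fun x => phi (t x) (y x) := by
  refine Continuous.subtype_mk ((PiLp.continuous_toLp 2 _).comp (continuous_pi fun j => ?_)) _
  refine Fin.lastCases ?_ (fun i => ?_) j
  · simp only [Fin.snoc_last]
    exact Real.continuous_cos.comp ht
  · simp only [Fin.snoc_castSucc]
    exact (Real.continuous_sin.comp ht).mul ((continuous_apply i).comp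
      ((PiLp.continuous_ofLp 2 _).comp (continuous_subtype_val.comp hy)))

lemma continuous_merid (f : C(Sph (m + 2), ℝ)) : Continuous (merid (m := m) f) :=
  ContinuousMap.continuous_of_continuous_uncurry _ <| f.continuous.comp <|
    (continuous_subtype_val.comp continuous_snd).phi continuous_fst

lemma phi_zero (y : Sph (m + 1)) : phi 0 y = npole (m + 1) := by
  refine Subtype.ext (PiLp.ext fun j => Fin.lastCases ?_ (fun i => ?_) j)
  · simp [phi, npole]
  · simp [phi, npole, (Fin.castSucc_lt_last i).ne]

lemma phi_pi (y : Sph (m + 1)) : phi π y = spole (m + 1) := by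
  refine Subtype.ext (PiLp.ext fun j => Fin.lastCases ?_ (fun i => ?_) j)
  · simp [phi, spole]
  · simp [phi, spole, (Fin.castSucc_lt_last i).ne]

lemma merid_apply_loPt (f : C(Sph (m + 2), ℝ)) (y : Sph (m + 1)) :
    merid f y loPt = f (npole (m + 1)) :=
  congrArg f (phi_zero y)

lemma merid_apply_hiPt (f : C(Sph (m + 2), ℝ)) (y : Sph (m + 1)) :
    merid f y hiPt = f (spole (m + 1)) :=
  congrArg f (phi_pi y)

def latPt (ξ : Sph (m + 2)) : IccPi := ⟨lat ξ, lat_mem_Icc ξ⟩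

lemma continuous_latPt : Continuous (latPt (m := m)) :=
  Continuous.subtype_mk (Real.continuous_arccos.comp
    ((continuous_apply _).comp ((PiLp.continuous_ofLp 2 _).comp continuous_subtype_val))) _

lemma continuous_eqpart : Continuous (eqpart (m := m)) :=
  (PiLp.continuous_toLp 2 _).comp <| continuous_pi fun i => (continuous_apply i.castSucc).comp
    ((PiLp.continuous_ofLp 2 _).comp continuous_subtype_val)

lemma continuousAt_ydir {ξ₀ : Sph (m + 2)} (h : eqpart ξ₀ ≠ 0) :
    ContinuousAt (ydir (m := m)) ξ₀ := by
  rw [IsInducing.subtypeVal.continuousAt_iff]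
  have hydir : (fun ξ => ‖eqpart ξ‖⁻¹ • eqpart ξ) =ᶠ[𝓝 ξ₀] fun ξ => (ydir ξ : Eucl (m + 1)) := by
    filter_upwards [(isOpen_compl_singleton.preimage continuous_eqpart).mem_nhds h] with ξ hξ
    rw [ydir, dif_neg (show eqpart ξ ≠ 0 from hξ)]
  refine ContinuousAt.congr ?_ hydir
  exact (continuous_eqpart.norm.continuousAt.inv₀ (norm_ne_zero_iff.mpr h)).smul
    continuous_eqpart.continuousAt

lemma latPt_eq_loPt_or_hiPt {ξ : Sph (m + 2)} (h : eqpart ξ = 0) :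
    latPt ξ = loPt ∨ latPt ξ = hiPt := by
  have hsum := sphere_sum_sq ξ
  rw [Fin.sum_univ_castSucc] at hsum
  have hzero (i : Fin (m + 1)) : ξ.1 i.castSucc = 0 := congrArg (· i) h
  have hlast : ξ.1 (Fin.last (m + 1)) = 1 ∨ ξ.1 (Fin.last (m + 1)) = -1 := by
    simpa [hzero] using hsum
  rcases hlast with hlast | hlast
  · exact .inl (Subtype.ext (by simp [latPt, lat, loPt, hlast]))
  · exact .inr (Subtype.ext (by simp [latPt, lat, hiPt, hlast]))

theorem continuous_comp_ydir_latPt {Z : Type*} [TopologicalSpace Z]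
    {G : Sph (m + 1) × IccPi → Z} (hG : Continuous G) {z : Z} (hlo : ∀ y, G (y, loPt) = z)
    (hhi : ∀ y, G (y, hiPt) = z) : Continuous fun ξ : Sph (m + 2) => G (ydir ξ, latPt ξ) := by
  refine continuous_iff_continuousAt.2 fun ξ₀ => ?_
  by_cases hξ₀ : eqpart ξ₀ = 0
  · have hfiber : ∀ y, G (y, latPt ξ₀) = z := by
      rcases latPt_eq_loPt_or_hiPt hξ₀ with h | h <;> rwa [h]
    have := hG.tendsto_prodMk_of_const_fiber hfiber ydir continuous_latPt.continuousAt
    rwa [ContinuousAt, hfiber]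
  · exact hG.continuousAt.comp ((continuousAt_ydir hξ₀).prodMk continuous_latPt.continuousAt)

end Latitudinal

theorem latitudinal_operator_preserves_continuity_general
    (m : ℕ)
    (P : C(IccPi, ℝ) →L[ℝ] C(IccPi, ℝ))
    (hP : ∀ g : C(IccPi, ℝ), g loPt = 0 → g hiPt = 0 → P g loPt = 0 ∧ P g hiPt = 0)
    (f : C(Sph (m + 2), ℝ)) :
    Continuous (latOp P f) := by
  set g₀ := merid f (npole m)
  have hC₀ (y : Sph (m + 1)) : P (merid f y - g₀) loPt = 0 ∧ P (merid f y - g₀) hiPt = 0 :=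
    hP _ (by simp [g₀, merid_apply_loPt]) (by simp [g₀, merid_apply_hiPt])
  have hG : Continuous fun p : Sph (m + 1) × IccPi => P (merid f p.1 - g₀) p.2 :=
    ((P.continuous.comp ((continuous_merid f).sub continuous_const)).comp continuous_fst).eval
      continuous_snd
  have hsplit : latOp P f = fun ξ => P (merid f (ydir ξ) - g₀) (latPt ξ) + P g₀ (latPt ξ) := by
    funext ξ
    simp [latOp, latPt]
  rw [hsplit]
  exact (continuous_comp_ydir_latPt hG (fun y => (hC₀ y).1) fun y => (hC₀ y).2).add
    ((P g₀).continuous.comp continuous_latPt)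

/-- `k = m + 1 ≥ 2`: if `P : C[0,π] → C[0,π]` is continuous linear and preserves
`C₀[0,π]`, then the latitudinal operator `P^#` maps `C(S^k)` into `C(S^k)`. -/
theorem latitudinal_operator_preserves_continuity
    (m : ℕ) (hm : 1 ≤ m)
    (P : C(IccPi, ℝ) →L[ℝ] C(IccPi, ℝ))
    (hP : ∀ g : C(IccPi, ℝ), g loPt = 0 → g hiPt = 0 → P g loPt = 0 ∧ P g hiPt = 0)
    (f : C(Sph (m + 2), ℝ)) :
    Continuous (latOp P f) :=
  latitudinal_operator_preserves_continuity_general m P hP f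
end
end
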